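/- Let n ≥ 3 and let λ be a partition of n whose first part satisfies 2·λ_1 ≥ n−1. Assume that λ is not the partition (n/2, n/2) when n is even, and that λ does not have exactly three parts with first part equal to (n−1)/2 when n is odd. Then |η_λ| < D_{λ_1+1} + (n−λ_1−1)·D_{λ_1}, where the right-hand side is computed in the integers (so the coefficient n−λ_1−1 may be −1 when λ = (n)). When λ_1 ≤ n−1 the right-hand side equals |η_{(λ_1+1,1^{n−λ_1−1})}|. -/

import Mathlib

/-- Derangement numbers: `D 0 = 1`, `D (m+1) = (m+1) * D m + (-1)^(m+1)`. -/
def derange : ℕ → ℤ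
  | 0 => 1
  | n + 1 => (n + 1 : ℤ) * derange n + (-1) ^ (n + 1)

/-- Subtract one from every part and discard the parts that become zero
(deleting the first column of the Ferrers diagram). -/
def strip (l : List ℕ) : List ℕ := (l.map (· - 1)).filter (fun x => 0 < x)

lemma strip_measure (l : List ℕ) : (strip l).sum + (strip l).length ≤ l.sum := by
  induction l with
  | nil => simp [strip]
  | cons x t ih =>
      simp only [strip, List.map_cons, List.filter_cons] at ih ⊢
      by_cases hx : 0 < x - 1 <;> simp [hx] <;> omega

/-- The eigenvalues of the derangement graph, defined by Renteln's recurrence: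
`η ∅ = 1` and `η λ = (-1)^h (η (λ-ĥ) + (-1)^{λ₁} h η (λ-ĉ))`, where
`h = λ₁ + r - 1` is the hook size, `λ-ĥ = strip (tail λ)` removes the hook,
and `λ-ĉ = strip λ` removes the first column. -/
def eta : List ℕ → ℤ
  | [] => 1
  | a :: t =>
      (-1) ^ (a + t.length) *
        (eta (strip t) + (-1) ^ a * ((a : ℤ) + t.length) * eta (strip (a :: t)))
  termination_by l => l.sum + l.length
  decreasing_by
  · have h1 := strip_measure t
    simp only [List.sum_cons, List.length_cons]
    omega
  · have h1 := strip_measure (a :: t)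
    simp only [List.sum_cons, List.length_cons] at h1 ⊢
    omega

/-- `l` is (the list of parts of) a partition of `n`: weakly decreasing,
all parts positive, summing to `n`. -/
def IsPartition (n : ℕ) (l : List ℕ) : Prop :=
  l.Pairwise (· ≥ ·) ∧ (∀ x ∈ l, 0 < x) ∧ l.sum = n

/-- The hook partition `(a, 1^(n-a))` of `n`. -/
def hookP (n a : ℕ) : List ℕ := a :: List.replicate (n - a) 1

/-!
Renteln's recursion gives `|η_λ| ≤ |η_{λ-ĥ}| + h |η_{λ-ĉ}|`. The hook-removed term is bounded
by `|η_μ| ≤ D_{|μ|}` (proved by the same recursion). Deleting the first column of a partition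
`(a, μ)` with `μ ⊢ k ≤ a + 1` gives a partition `(a - 1, μ')` of the same kind, so an explicit
bound of order `(k + 2)(a + k) D_{a-1} / 2` propagates by induction on `a ≥ 6`; it stays below
the hook value `n D_a - (-1)^a ≈ 2a (a + k) D_{a-1} / 2` because `k + 2 < 2a`. The partitions
with first part at most 5, and the base case `a = 6`, are finitely many and are checked by
evaluation.
-/

theorem derange_succ (m : ℕ) : derange (m + 1) = (m + 1) * derange m + (-1) ^ (m + 1) := rfl

theorem derange_eq_numDerangements (m : ℕ) : derange m = numDerangements m := by
  induction m with
  | zero => rfl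
  | succ m ih => rw [derange_succ, ih, numDerangements_succ]; ring

theorem derange_nonneg (m : ℕ) : 0 ≤ derange m := by
  rw [derange_eq_numDerangements]; positivity

theorem derange_mono {i j : ℕ} (hi : 1 ≤ i) (hij : i ≤ j) : derange i ≤ derange j := by
  have hmono : Monotone fun m => numDerangements (m + 1) :=
    monotone_nat_of_le_succ fun m => by
      simp only [numDerangements_add_two]
      nlinarith
  obtain ⟨i, rfl⟩ := Nat.exists_eq_add_of_le' hi
  obtain ⟨j, rfl⟩ := Nat.exists_eq_add_of_le' (hi.trans hij)
  simp only [derange_eq_numDerangements, Nat.cast_le]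
  exact hmono (by omega)

theorem one_le_derange {m : ℕ} (hm : m ≠ 1) : 1 ≤ derange m := by
  rcases Nat.lt_or_ge m 2 with h | h
  · obtain rfl : m = 0 := by omega
    rfl
  · exact derange_mono (by norm_num) h

theorem derange_le_derange {i j : ℕ} (hij : i ≤ j) (hj : j ≠ 1) :
    derange i ≤ derange j := by
  rcases Nat.eq_zero_or_pos i with rfl | hi
  · exact one_le_derange hj
  · exact derange_mono hi hij

theorem neg_one_le_neg_one_pow (m : ℕ) : -1 ≤ (-1 : ℤ) ^ m :=
  (abs_le.mp (abs_neg_one_pow m).le).1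

theorem neg_one_pow_le_one (m : ℕ) : (-1 : ℤ) ^ m ≤ 1 :=
  (abs_le.mp (abs_neg_one_pow m).le).2

theorem sub_one_le_derange (m : ℕ) : (m : ℤ) - 1 ≤ derange m := by
  rcases Nat.lt_or_ge m 3 with h | h
  · interval_cases m <;> decide
  · obtain ⟨m, rfl⟩ := Nat.exists_eq_add_of_le' (show 1 ≤ m by omega)
    have := one_le_derange (show m ≠ 1 by omega)
    rw [derange_succ]
    push_cast
    nlinarith [neg_one_le_neg_one_pow (m + 1)]

theorem four_mul_add_twenty_four_le_derange {m : ℕ} (hm : 5 ≤ m) :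
    4 * (m : ℤ) + 24 ≤ derange m := by
  induction m, hm using Nat.le_induction with
  | base => decide
  | succ m hm ih =>
    rw [derange_succ]
    push_cast
    nlinarith [neg_one_le_neg_one_pow (m + 1)]

theorem derange_add_mul_derange_le {n i j h : ℕ} (hi : i + 3 ≤ n) (hj : 1 ≤ j)
    (hjn : j + 2 ≤ n) (hh : h ≤ n) : derange i + h * derange j ≤ derange n := by
  obtain ⟨m, rfl⟩ := Nat.exists_eq_add_of_le' (show 2 ≤ n by omega)
  rcases Nat.lt_or_ge m 2 with hm | hm
  · obtain ⟨rfl, rfl, rfl⟩ : m = 1 ∧ i = 0 ∧ j = 1 := by omega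
    norm_num [derange]
  have hDi := derange_le_derange (show i ≤ m by omega) (show m ≠ 1 by omega)
  have hDj := derange_le_derange (show j ≤ m by omega) (show m ≠ 1 by omega)
  have hD := one_le_derange (show m ≠ 1 by omega)
  have hh' : (h : ℤ) ≤ m + 2 := by exact_mod_cast hh
  have hm' : (2 : ℤ) ≤ m := by exact_mod_cast hm
  rw [derange_succ, derange_succ]
  push_cast
  rcases neg_one_pow_eq_or ℤ m with hs | hs <;> simp only [pow_add, pow_one, hs] <;>
    nlinarith [mul_le_mul hh' hDj (derange_nonneg j) (by positivity),
      mul_nonneg (by nlinarith : (0 : ℤ) ≤ m * m + 2 * m - 1) (sub_nonneg.mpr hD)]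

theorem derange_succ_add_mul (n a : ℕ) :
    derange (a + 1) + ((n : ℤ) - a - 1) * derange a = n * derange a + (-1) ^ (a + 1) := by
  rw [derange_succ]
  ring

theorem strip_cons_of_two_le {a : ℕ} (t : List ℕ) (ha : 2 ≤ a) :
    strip (a :: t) = (a - 1) :: strip t := by
  simp [strip, show 0 < a - 1 by omega]

theorem strip_replicate_one (j : ℕ) : strip (List.replicate j 1) = [] := by
  simp [strip, List.map_replicate]

theorem sum_strip_add_length {l : List ℕ} (hl : ∀ x ∈ l, 0 < x) :
    (strip l).sum + l.length = l.sum := by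
  induction l with
  | nil => rfl
  | cons x t ih =>
    have hx := hl x (by simp)
    have ht := ih fun y hy => hl y (by simp [hy])
    simp only [strip, List.map_cons, List.filter_cons] at ht ⊢
    by_cases hx1 : 0 < x - 1
    · simp only [hx1, decide_true, ↓reduceIte, List.sum_cons, List.length_cons]
      omega
    · simp only [hx1, decide_false, Bool.false_eq_true, ↓reduceIte, List.sum_cons,
        List.length_cons]
      omega

theorem IsPartition.strip {n : ℕ} {l : List ℕ} (hl : IsPartition n l) :
    IsPartition (n - l.length) (strip l) := by
  obtain ⟨hsort, hpos, hsum⟩ := hl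
  refine ⟨?_, fun x hx => ?_, ?_⟩
  · exact List.Pairwise.filter _ (hsort.map _ fun _ _ hab => Nat.sub_le_sub_right hab 1)
  · simpa using (List.mem_filter.mp hx).2
  · have := sum_strip_add_length hpos
    omega

theorem IsPartition.tail {n a : ℕ} {t : List ℕ} (hl : IsPartition n (a :: t)) :
    IsPartition (n - a) t := by
  obtain ⟨hsort, hpos, hsum⟩ := hl
  refine ⟨(List.pairwise_cons.mp hsort).2, fun x hx => hpos x (by simp [hx]), ?_⟩
  simp only [List.sum_cons] at hsum
  omega

theorem IsPartition.le_head {n a : ℕ} {t : List ℕ} (hl : IsPartition n (a :: t)) :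
    ∀ x ∈ t, x ≤ a :=
  (List.pairwise_cons.mp hl.1).1

theorem IsPartition.length_le {n : ℕ} {l : List ℕ} (hl : IsPartition n l) : l.length ≤ n := by
  obtain ⟨-, hpos, rfl⟩ := hl
  have := sum_strip_add_length hpos
  omega

theorem eta_nil : eta [] = 1 := by
  rw [eta]

theorem eta_cons (a : ℕ) (t : List ℕ) :
    eta (a :: t) = (-1) ^ (a + t.length) *
      (eta (strip t) + (-1) ^ a * ((a : ℤ) + t.length) * eta (strip (a :: t))) := by
  rw [eta]

theorem abs_eta_cons_le (a : ℕ) (t : List ℕ) :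
    |eta (a :: t)| ≤ |eta (strip t)| + ((a : ℤ) + t.length) * |eta (strip (a :: t))| := by
  rw [eta_cons, abs_mul, abs_neg_one_pow, one_mul]
  refine (abs_add_le _ _).trans ?_
  rw [abs_mul, abs_mul, abs_neg_one_pow, one_mul,
    abs_of_nonneg (by positivity : (0 : ℤ) ≤ a + t.length)]

theorem eta_cons_replicate_one (b j : ℕ) :
    eta ((b + 1) :: List.replicate j 1) =
      (-1) ^ (b + 1 + j) * (1 + (-1) ^ (b + 1) * ((b + 1 + j : ℕ) : ℤ) * derange b) := by
  induction b generalizing j with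
  | zero =>
    rw [eta_cons, strip_replicate_one, ← List.replicate_succ, strip_replicate_one, eta_nil]
    simp [derange]
  | succ b ih =>
    have hrow := ih 0
    simp only [List.replicate_zero, add_zero] at hrow
    rw [eta_cons, strip_replicate_one, strip_cons_of_two_le _ (by omega), strip_replicate_one,
      eta_nil, Nat.add_sub_cancel, hrow]
    simp only [List.length_replicate, derange_succ]
    push_cast
    rcases neg_one_pow_eq_or ℤ b with h | h <;> simp only [pow_add, pow_one, h] <;> ring

theorem eta_singleton (b : ℕ) : eta [b] = derange b := by
  cases b with
  | zero => simp [eta_cons, strip, eta_nil, derange]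
  | succ b =>
    have := eta_cons_replicate_one b 0
    simp only [List.replicate_zero, add_zero] at this
    rw [this, derange_succ]
    rcases neg_one_pow_eq_or ℤ b with h | h <;> simp only [pow_add, pow_one, h] <;> push_cast <;>
      ring

theorem eta_pair (a : ℕ) :
    eta [a + 1, a + 1] = (-1) ^ (a + 1) * ((a + 3) * derange (a + 1) - (-1) ^ (a + 1)) := by
  induction a with
  | zero => simp [eta_cons, strip, eta_nil, derange]
  | succ a ih =>
    have hrow : strip [a + 2] = [a + 1] := by simp [strip]
    have hpair : strip [a + 2, a + 2] = [a + 1, a + 1] := by simp [strip]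
    rw [eta_cons, hpair, hrow, eta_singleton, ih]
    simp only [List.length_cons, List.length_nil, derange_succ (a + 1)]
    push_cast
    rcases neg_one_pow_eq_or ℤ a with h | h <;> simp only [pow_add, pow_one, h] <;> ring

theorem abs_eta_hookP {n a : ℕ} (h : a + 1 ≤ n) :
    |eta (hookP n (a + 1))| = n * derange a + (-1) ^ (a + 1) := by
  rw [hookP, eta_cons_replicate_one, Nat.add_sub_cancel' h, abs_mul, abs_neg_one_pow, one_mul]
  rcases neg_one_pow_eq_or ℤ (a + 1) with hs | hs <;> rw [hs]
  · rw [abs_of_nonneg (by have := derange_nonneg a; positivity)]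
    ring
  · have ha : a ≠ 1 := by rintro rfl; norm_num at hs
    have := one_le_derange ha
    rw [abs_of_nonpos (by nlinarith)]
    ring

theorem abs_eta_le_derange {n : ℕ} {l : List ℕ} (hl : IsPartition n l) :
    |eta l| ≤ derange n := by
  induction n using Nat.strong_induction_on generalizing l with
  | _ n ih =>
  match l, hl with
  | [], hl =>
    obtain rfl : n = 0 := hl.2.2.symm
    simp [eta_nil, derange]
  | [b], hl =>
    obtain rfl : b = n := by simpa using hl.2.2
    rw [eta_singleton, abs_of_nonneg (derange_nonneg b)]
  | b :: c :: t, hl =>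
    have hb := hl.2.1 b (by simp)
    have hsum : b + (c :: t).sum = n := by simpa using hl.2.2
    have htail := hl.tail.length_le
    rcases Nat.lt_or_ge b 2 with hb1 | hb2
    · obtain rfl : b = 1 := by omega
      have hones : c :: t = List.replicate (c :: t).length 1 :=
        List.eq_replicate_length.mpr fun x hx => by
          have := hl.le_head x hx; have := hl.2.1 x (by simp [hx]); omega
      have hlen : (c :: t).length = n - 1 := by
        have := congrArg List.sum hones
        simp only [List.sum_replicate, smul_eq_mul, mul_one] at this
        omega
      rw [hones, hlen, show 1 :: List.replicate (n - 1) 1 = hookP n (0 + 1) from rfl,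
        abs_eta_hookP (by omega)]
      simpa [derange] using sub_one_le_derange n
    · have hlen : (b :: c :: t).length = (c :: t).length + 1 := rfl
      have hpos : 1 ≤ (c :: t).length := by simp
      have hhook := ih _ (by omega) hl.tail.strip
      have hcol := ih _ (by omega) hl.strip
      refine (abs_eta_cons_le b (c :: t)).trans (le_trans ?_ (derange_add_mul_derange_le
        (i := n - b - (c :: t).length) (j := n - (b :: c :: t).length) (h := b + (c :: t).length)
        (by omega) ?_ ?_ ?_))
      · push_cast
        gcongr
      all_goals omega

theorem two_mul_abs_eta_cons_le {a k : ℕ} {t : List ℕ} (ha : 2 ≤ a)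
    (ht : IsPartition (a + k) (a :: t)) :
    2 * |eta (a :: t)| ≤
      2 * derange (k - t.length) + ((a : ℤ) + t.length) * (2 * |eta ((a - 1) :: strip t)|) := by
  have hhook := abs_eta_le_derange ht.tail.strip
  rw [Nat.add_sub_cancel_left] at hhook
  have := abs_eta_cons_le a t
  rw [strip_cons_of_two_le t ha] at this
  linarith

/-- The larger constant on the diagonal `k = a` makes room for `λ = (a, a)`, see `eta_pair`. -/
def etaBound (a k : ℕ) : ℤ :=
  ((k : ℤ) + 2) * (a + k) * derange (a - 1) + if k = a then 2 * (a : ℤ) + 6 else 2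

theorem etaBound_succ_self (a : ℕ) :
    etaBound (a + 1) (a + 1) = ((a : ℤ) + 3) * (2 * a + 2) * derange a + 2 * a + 8 := by
  simp only [etaBound, Nat.add_sub_cancel, if_true]
  push_cast
  ring

theorem etaBound_succ_of_ne {a k : ℕ} (hk : k ≠ a + 1) :
    etaBound (a + 1) k = ((k : ℤ) + 2) * (a + 1 + k) * derange a + 2 := by
  simp only [etaBound, if_neg hk, Nat.add_sub_cancel]
  push_cast
  ring

theorem etaBound_succ_ge (a k : ℕ) :
    ((k : ℤ) + 2) * (a + 1 + k) * derange a + 2 ≤ etaBound (a + 1) k := by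
  by_cases hk : k = a + 1
  · subst hk; rw [etaBound_succ_self]; push_cast; nlinarith
  · rw [etaBound_succ_of_ne hk]

theorem etaBound_succ_le (a k : ℕ) :
    etaBound (a + 1) k ≤ ((k : ℤ) + 2) * (a + 1 + k) * derange a + 2 * a + 8 := by
  by_cases hk : k = a + 1
  · subst hk; rw [etaBound_succ_self]; push_cast; nlinarith
  · rw [etaBound_succ_of_ne hk]; linarith

theorem etaBound_step_coeff_le {m k' j : ℕ} (hk' : k' ≤ m) (hj : 1 ≤ j) :
    (m : ℤ) + 1 + ((m : ℤ) + 2 + j) * (k' + 2) * (m + 1 + k') + 2 ≤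
      ((k' : ℤ) + j + 2) * (m + 2 + k' + j) * (m + 1) := by
  obtain ⟨v, rfl⟩ := Nat.exists_eq_add_of_le hk'
  obtain ⟨u, rfl⟩ := Nat.exists_eq_add_of_le' hj
  rw [← sub_nonneg]
  push_cast
  ring_nf
  positivity

theorem etaBound_step {a k' j : ℕ} (ha : 6 ≤ a) (hj : 1 ≤ j) (hk : k' + j ≤ a + 2)
    (hdiag : k' < a ∨ 2 ≤ j) :
    2 * derange k' + ((a : ℤ) + 1 + j) * etaBound a k' ≤ etaBound (a + 1) (k' + j) := by
  obtain ⟨m, rfl⟩ := Nat.exists_eq_add_of_le' (show 1 ≤ a by omega)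
  have hx := four_mul_add_twenty_four_le_derange (show 5 ≤ m by omega)
  have hs := neg_one_le_neg_one_pow (m + 1)
  have hm : (5 : ℤ) ≤ m := by exact_mod_cast (show 5 ≤ m by omega)
  refine le_trans ?_ (etaBound_succ_ge _ _)
  rw [derange_succ]
  rcases Nat.lt_or_ge k' (m + 1) with hk' | hk'
  · rw [etaBound_succ_of_ne (by omega)]
    have hcoeff := etaBound_step_coeff_le (show k' ≤ m by omega) hj
    have hy := derange_le_derange (show k' ≤ m by omega) (show m ≠ 1 by omega)
    have hkj : (k' : ℤ) + j ≤ m + 3 := by exact_mod_cast (show k' + j ≤ m + 3 by omega)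
    have hE : ((k' : ℤ) + j + 2) * (m + 2 + k' + j) ≤ (m + 5) * (2 * m + 5) :=
      mul_le_mul (by linarith) (by linarith) (by positivity) (by linarith)
    push_cast
    nlinarith [mul_le_mul_of_nonneg_right hcoeff (by linarith : (0 : ℤ) ≤ derange m),
      mul_nonneg (by linarith : (0 : ℤ) ≤ (-1) ^ (m + 1) + 1)
        (by positivity : (0 : ℤ) ≤ ((k' : ℤ) + j + 2) * (m + 2 + k' + j)),
      mul_le_mul_of_nonneg_left hx (by linarith : (0 : ℤ) ≤ m + 1)]
  · obtain ⟨rfl, rfl⟩ : k' = m + 1 ∧ j = 2 := by omega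
    rw [etaBound_succ_self, derange_succ]
    push_cast
    nlinarith [mul_le_mul_of_nonneg_right (by nlinarith : 4 * ((m : ℤ) + 1) ≤ (m - 1) * (m + 1))
        (by linarith : (0 : ℤ) ≤ derange m),
      mul_le_mul_of_nonneg_left hx (by linarith : (0 : ℤ) ≤ 4 * (m + 1)),
      mul_nonneg (by linarith : (0 : ℤ) ≤ (-1) ^ (m + 1) + 1)
        (by nlinarith : (0 : ℤ) ≤ (m + 5) * (2 * m + 5) - 2)]

theorem etaBound_lt {a k : ℕ} (ha : 6 ≤ a) (hk : k ≤ a + 1) :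
    etaBound a k < 2 * (((a + k : ℕ) : ℤ) * derange a + (-1) ^ (a + 1)) := by
  obtain ⟨m, rfl⟩ := Nat.exists_eq_add_of_le' (show 1 ≤ a by omega)
  have hx := four_mul_add_twenty_four_le_derange (show 5 ≤ m by omega)
  have hm : (5 : ℤ) ≤ m := by exact_mod_cast (show 5 ≤ m by omega)
  have hk' : (k : ℤ) ≤ m + 2 := by exact_mod_cast hk
  refine (etaBound_succ_le m k).trans_lt ?_
  rw [derange_succ]
  push_cast
  rcases neg_one_pow_eq_or ℤ m with hs | hs <;> simp only [pow_add, pow_one, hs] <;>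
    nlinarith [mul_le_mul_of_nonneg_right
      (by nlinarith : 3 * ((m : ℤ) + 1 + k) ≤ (m + 1 + k) * (2 * m - k))
      (by linarith : (0 : ℤ) ≤ derange m)]

theorem two_mul_abs_eta_singleton_le_etaBound (a : ℕ) :
    2 * |eta [a + 1]| ≤ etaBound (a + 1) 0 := by
  rw [eta_singleton, abs_of_nonneg (derange_nonneg _), etaBound_succ_of_ne (by omega),
    derange_succ]
  push_cast
  linarith [neg_one_pow_le_one (a + 1)]

theorem two_mul_abs_eta_pair_le_etaBound (a : ℕ) :
    2 * |eta [a + 1, a + 1]| ≤ etaBound (a + 1) (a + 1) := by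
  rw [eta_pair, abs_mul, abs_neg_one_pow, one_mul, etaBound_succ_self, derange_succ]
  have hA := mul_nonneg (by positivity : (0 : ℤ) ≤ (a + 3) * (a + 1)) (derange_nonneg a)
  have hs := neg_one_le_neg_one_pow (a + 1)
  have hs' := neg_one_pow_le_one (a + 1)
  have ha : (0 : ℤ) ≤ a := by positivity
  have hX : |((a : ℤ) + 3) * ((a + 1) * derange a + (-1) ^ (a + 1)) - (-1) ^ (a + 1)| ≤
      (a + 3) * (a + 1) * derange a + a + 2 := by
    rw [abs_le]
    constructor <;> nlinarith
  linarith

/-- Weakly decreasing lists with parts in `[1, m]` and sum at most `s`, enumerated with fuel `f`. -/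
def boundedPartitions : ℕ → ℕ → ℕ → List (List ℕ)
  | 0, _, _ => []
  | _ + 1, 0, _ => [[]]
  | f + 1, m + 1, s =>
      boundedPartitions f m s ++
        if m + 1 ≤ s then (boundedPartitions f (m + 1) (s - (m + 1))).map (List.cons (m + 1))
        else []

theorem mem_boundedPartitions {f m s k : ℕ} {t : List ℕ} (hf : m + s < f) (ht : IsPartition k t)
    (hk : k ≤ s) (htm : ∀ x ∈ t, x ≤ m) : t ∈ boundedPartitions f m s := by
  induction f generalizing m s k t with
  | zero => omega
  | succ f ih =>
    rcases m with _ | m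
    · obtain rfl : t = [] := List.eq_nil_iff_forall_not_mem.mpr fun x hx => by
        have := htm x hx; have := ht.2.1 x hx; omega
      simp [boundedPartitions]
    rw [boundedPartitions, List.mem_append]
    rcases t with _ | ⟨x, u⟩
    · exact Or.inl (ih (by omega) ht hk (by simp))
    have hx : x ≤ k := by have := ht.2.2; simp only [List.sum_cons] at this; omega
    rcases Nat.lt_or_ge x (m + 1) with hxm | hxm
    · refine Or.inl (ih (by omega) ht hk fun y hy => ?_)
      rcases List.mem_cons.mp hy with rfl | hy
      · omega
      · exact (ht.le_head y hy).trans (by omega)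
    · obtain rfl : x = m + 1 := le_antisymm (htm x (by simp)) hxm
      rw [if_pos (by omega)]
      exact Or.inr (List.mem_map_of_mem (ih (by omega) ht.tail (by omega) ht.le_head))

/-- A structurally recursive copy of `eta` that the kernel can evaluate; `eta` itself is defined
by well-founded recursion, which `decide` does not unfold. -/
def etaFuel : ℕ → List ℕ → ℤ
  | _, [] => 1
  | 0, _ :: _ => 0
  | f + 1, a :: t =>
      (-1) ^ (a + t.length) *
        (etaFuel f (strip t) + (-1) ^ a * ((a : ℤ) + t.length) * etaFuel f (strip (a :: t)))

theorem etaFuel_eq_eta {f : ℕ} {l : List ℕ} (h : l.sum + l.length ≤ f) :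
    etaFuel f l = eta l := by
  induction f generalizing l with
  | zero =>
    obtain rfl : l = [] := List.length_eq_zero_iff.mp (by omega)
    rw [eta_nil, etaFuel]
  | succ f ih =>
    rcases l with _ | ⟨a, t⟩
    · rw [eta_nil, etaFuel]
    have h1 := strip_measure t
    have h2 := strip_measure (a :: t)
    simp only [List.sum_cons, List.length_cons] at h h2
    rw [etaFuel, eta_cons, ih (by omega), ih (by omega)]

theorem two_mul_abs_etaFuel_le_etaBound_six :
    ∀ t ∈ boundedPartitions 14 6 7, 2 * |etaFuel 24 (6 :: t)| ≤ etaBound 6 t.sum := by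
  decide

theorem abs_etaFuel_lt_of_lt_six : ∀ a < 6, ∀ t ∈ boundedPartitions 12 a (a + 1),
    3 ≤ a + t.sum → (Even (a + t.sum) → a :: t ≠ [(a + t.sum) / 2, (a + t.sum) / 2]) →
    (Odd (a + t.sum) → ¬((a :: t).length = 3 ∧ a = (a + t.sum - 1) / 2)) →
    |etaFuel 24 (a :: t)| < ((a + t.sum : ℕ) : ℤ) * derange a + (-1) ^ (a + 1) := by
  decide

theorem two_mul_abs_eta_six_le_etaBound {k : ℕ} {t : List ℕ} (hk : k ≤ 7)
    (ht : IsPartition (6 + k) (6 :: t)) : 2 * |eta (6 :: t)| ≤ etaBound 6 k := by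
  have hmem := mem_boundedPartitions (f := 14) (s := 7) (by norm_num) ht.tail (by omega)
    ht.le_head
  have hsum : t.sum = k := by simpa using ht.2.2
  have hlen := ht.tail.length_le
  have := two_mul_abs_etaFuel_le_etaBound_six t hmem
  rwa [etaFuel_eq_eta (by simp only [List.sum_cons, List.length_cons]; omega), hsum] at this

theorem two_mul_abs_eta_le_etaBound {a k : ℕ} {t : List ℕ} (ha : 6 ≤ a) (hk : k ≤ a + 1)
    (ht : IsPartition (a + k) (a :: t)) : 2 * |eta (a :: t)| ≤ etaBound a k := by
  induction a, ha using Nat.le_induction generalizing k t with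
  | base => exact two_mul_abs_eta_six_le_etaBound hk ht
  | succ a ha ih =>
    by_cases hpair : t = [a + 1]
    · subst hpair
      obtain rfl : k = a + 1 := by simpa using ht.2.2.symm
      exact two_mul_abs_eta_pair_le_etaBound a
    rcases t with _ | ⟨c, t⟩
    · obtain rfl : k = 0 := by simpa using ht.2.2
      exact two_mul_abs_eta_singleton_le_etaBound a
    have hrec := two_mul_abs_eta_cons_le (by omega) ht
    have hcol := ht.strip
    rw [strip_cons_of_two_le (c :: t) (by omega)] at hcol
    simp only [Nat.add_sub_cancel] at hrec hcol
    have hjk := ht.tail.length_le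
    rw [Nat.add_sub_cancel_left] at hjk
    obtain ⟨k', rfl⟩ := Nat.exists_eq_add_of_le' hjk
    rw [Nat.add_sub_cancel] at hrec
    set j := (c :: t).length with hj
    have hj1 : 1 ≤ j := by simp [hj]
    have hIH := ih (k := k') (by omega)
      (by convert hcol using 1; simp only [hj, List.length_cons]; omega)
    have hdiag : k' < a ∨ 2 ≤ j := by
      rcases t with _ | ⟨d, t⟩
      · have hc := ht.le_head c (by simp)
        have hk : c = k' + 1 := by simpa [hj] using ht.2.2
        have hca : c ≠ a + 1 := by rintro rfl; exact hpair rfl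
        left; omega
      · right; simp [hj]
    have hstep := etaBound_step ha hj1 (by omega) hdiag
    push_cast at hrec
    nlinarith [mul_le_mul_of_nonneg_left hIH (by positivity : (0 : ℤ) ≤ a + 1 + j)]

theorem abs_eta_lt_of_lt_six {n a : ℕ} {t : List ℕ} (ha : a < 6) (hn : 3 ≤ n)
    (hl : IsPartition n (a :: t)) (h1 : n ≤ 2 * a + 1)
    (he : Even n → a :: t ≠ [n / 2, n / 2])
    (ho : Odd n → ¬((a :: t).length = 3 ∧ a = (n - 1) / 2)) :
    |eta (a :: t)| < n * derange a + (-1) ^ (a + 1) := by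
  have hsum : a + t.sum = n := by simpa using hl.2.2
  have hmem := mem_boundedPartitions (f := 12) (s := a + 1) (by omega) hl.tail (by omega)
    hl.le_head
  have hlen := hl.tail.length_le
  subst hsum
  have := abs_etaFuel_lt_of_lt_six a ha t (by simpa using hmem) hn he ho
  rwa [etaFuel_eq_eta (by simp only [List.sum_cons, List.length_cons]; omega)] at this

theorem abs_eta_lt_of_six_le {n a : ℕ} {t : List ℕ} (ha : 6 ≤ a) (hl : IsPartition n (a :: t))
    (h1 : n ≤ 2 * a + 1) : |eta (a :: t)| < n * derange a + (-1) ^ (a + 1) := by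
  have hsum : a + t.sum = n := by simpa using hl.2.2
  subst hsum
  have := two_mul_abs_eta_le_etaBound ha (by omega) hl
  have := etaBound_lt ha (show t.sum ≤ a + 1 by omega)
  push_cast at this ⊢
  linarith

/-- For `n ≥ 3` and `λ ⊢ n` with `2λ₁ ≥ n-1`, excluding `(n/2, n/2)` for even `n` and
three-part partitions with first part `(n-1)/2` for odd `n`:
`|η_λ| < D_{λ₁+1} + (n-λ₁-1) D_{λ₁}` (computed in `ℤ`); when `λ₁ ≤ n-1` the right-hand
side equals `|η_{(λ₁+1,1^{n-λ₁-1})}|`. -/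
theorem eta_abs_strict_upper_bound (n : ℕ) (hn : 3 ≤ n)
    (l : List ℕ) (hl : IsPartition n l) (h1 : n - 1 ≤ 2 * l.headI)
    (he : Even n → l ≠ [n / 2, n / 2])
    (ho : Odd n → ¬(l.length = 3 ∧ l.headI = (n - 1) / 2)) :
    |eta l| < derange (l.headI + 1) + ((n : ℤ) - l.headI - 1) * derange l.headI ∧
    (l.headI ≤ n - 1 →
      |eta (hookP n (l.headI + 1))| =
        derange (l.headI + 1) + ((n : ℤ) - l.headI - 1) * derange l.headI) := by
  obtain ⟨a, t, rfl⟩ : ∃ a t, l = a :: t :=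
    List.exists_cons_of_ne_nil (by rintro rfl; simp [← hl.2.2] at hn)
  simp only [List.headI_cons, derange_succ_add_mul] at h1 ho ⊢
  refine ⟨?_, fun ha => abs_eta_hookP (by omega)⟩
  rcases Nat.lt_or_ge a 6 with ha | ha
  · exact abs_eta_lt_of_lt_six ha hn hl (by omega) he ho
  · exact abs_eta_lt_of_six_le ha hl (by omega)
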